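/- arXiv:math/0410540 — 3 statements merged into one kernel-verified Lean document; each statement's English description precedes it below -/
import Mathlib

section
/- For any polynomial f ∈ ℤ[x], prime p, and integer r ≥ 1, f(x)^{p^r} ≡ f(x^p)^{p^{r-1}} (mod p^r), i.e., every coefficient of f(x)^{p^r} - f(x^p)^{p^{r-1}} is divisible by p^r. -/
/-!
Modulo `p` the coefficients of `f ∈ ℤ[X]` are fixed by Frobenius, so `f ^ p ≡ f(X ^ p)`.
A congruence `a ≡ b (mod p)` lifts to `a ^ (p ^ k) ≡ b ^ (p ^ k) (mod p ^ (k + 1))`, and a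
constant divides a polynomial exactly when it divides every coefficient.
-/

open Polynomial

theorem Polynomial.natCast_dvd_pow_sub_expand (p : ℕ) [Fact p.Prime] (f : ℤ[X]) :
    (p : ℤ[X]) ∣ f ^ p - expand ℤ p f := by
  have hmod : map (Int.castRingHom (ZMod p)) (f ^ p - expand ℤ p f) = 0 := by
    rw [Polynomial.map_sub, Polynomial.map_pow, map_expand, ZMod.expand_card, sub_self]
  rw [← C_eq_natCast, C_dvd_iff_dvd_coeff]
  intro n
  rw [← ZMod.intCast_zmod_eq_zero_iff_dvd, ← eq_intCast (Int.castRingHom (ZMod p)), ← coeff_map,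
    hmod, coeff_zero]

theorem Polynomial.natCast_pow_dvd_pow_pow_sub_expand_pow (p : ℕ) [Fact p.Prime] (f : ℤ[X])
    (k : ℕ) : (p : ℤ[X]) ^ (k + 1) ∣ f ^ p ^ (k + 1) - (expand ℤ p f) ^ p ^ k := by
  simpa only [← pow_mul, ← pow_succ'] using
    dvd_sub_pow_of_dvd_sub (natCast_dvd_pow_sub_expand p f) k

theorem stmt_7_general (f : Polynomial ℤ) (p : ℕ) (hp : p.Prime) (r : ℕ) :
    ∀ k : ℕ, (p : ℤ) ^ r ∣ (f ^ (p ^ r) - (f.comp (X ^ p)) ^ (p ^ (r - 1))).coeff k := by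
  have : Fact p.Prime := ⟨hp⟩
  obtain _ | s := r
  · simp
  · rw [← C_dvd_iff_dvd_coeff, C_pow, C_eq_natCast, ← expand_eq_comp_X_pow]
    exact natCast_pow_dvd_pow_pow_sub_expand_pow p f s

/-- For `f ∈ ℤ[x]`, prime `p` and `r ≥ 1`, every coefficient of
`f(x)^(p^r) - f(x^p)^(p^(r-1))` is divisible by `p^r`. -/
theorem stmt_7 (f : Polynomial ℤ) (p : ℕ) (hp : p.Prime) (r : ℕ) (hr : 1 ≤ r) :
    ∀ k : ℕ, (p : ℤ) ^ r ∣ (f ^ (p ^ r) - (f.comp (X ^ p)) ^ (p ^ (r - 1))).coeff k :=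
  stmt_7_general f p hp r
end

section
/- Let g(x) = a(x)/b(x) with a, b ∈ ℤ[x], b monic, let p be prime and r ≥ 1. Then g(x)^{p^r} - g(x^p)^{p^{r-1}} = p^r · h(x) for some h(x) in the ring L of rational functions with monic integer denominator. -/
/-!
Write `g = a/b`. Modulo `p` the Frobenius gives `a^p ≡ a(x^p)` and `b^p ≡ b(x^p)` in `ℤ[x]`,
so `g^p - g(x^p) = p · w` with `w ∈ L`, the denominator `b^p · b(x^p)` of `w` being monic.
The usual lifting `p ∣ u - v ⇒ p^(k+1) ∣ u^(p^k) - v^(p^k)` inside the ring `L`, applied to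
`u = g^p`, `v = g(x^p)` and `k = r - 1`, finishes the proof.
-/

open Polynomial

theorem Polynomial.natCast_dvd_pow_sub_comp_X_pow (p : ℕ) [Fact p.Prime] (f : ℤ[X]) :
    (p : ℤ[X]) ∣ f ^ p - f.comp (X ^ p) := by
  rw [← C_eq_natCast]
  refine (C_dvd_iff_dvd_coeff _ _).2 fun i => (ZMod.intCast_zmod_eq_zero_iff_dvd _ p).1 ?_
  rw [← eq_intCast (Int.castRingHom (ZMod p)), ← coeff_map, Polynomial.map_sub,
    Polynomial.map_pow, ← expand_eq_comp_X_pow, map_expand, ZMod.expand_card, sub_self,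
    coeff_zero]

theorem div_pow_sub_div_eq_mul {K : Type*} [Field K] {a a' b b' x s t : K} {n : ℕ}
    (hb : b ≠ 0) (hb' : b' ≠ 0) (ha : a ^ n = a' + x * s) (hbn : b ^ n = b' + x * t) :
    (a / b) ^ n - a' / b' = x * ((s * b' - a' * t) / (b ^ n * b')) := by
  have hbn_ne : b ^ n ≠ 0 := pow_ne_zero n hb
  rw [div_pow, div_sub_div _ _ hbn_ne hb', ha, hbn]
  field_simp
  ring

theorem Subring.exists_mem_pow_pow_sub_pow_eq {R : Type*} [CommRing R] (S : Subring R) {p : ℕ}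
    {u v w : R} (hu : u ∈ S) (hv : v ∈ S) (hw : w ∈ S) (h : u ^ p - v = p * w) (k : ℕ) :
    ∃ y ∈ S, u ^ p ^ (k + 1) - v ^ p ^ k = p ^ (k + 1) * y := by
  have hdvd : (p : S) ∣ (⟨u, hu⟩ : S) ^ p - ⟨v, hv⟩ :=
    ⟨⟨w, hw⟩, Subtype.ext (by push_cast; exact h)⟩
  obtain ⟨⟨y, hy⟩, hy_eq⟩ := dvd_sub_pow_of_dvd_sub hdvd k
  refine ⟨y, hy, ?_⟩
  simpa [pow_succ', pow_mul] using congrArg Subtype.val hy_eq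

noncomputable def intPolyToRatFunc : ℤ[X] →+* RatFunc ℚ :=
  (algebraMap ℚ[X] (RatFunc ℚ)).comp (mapRingHom (Int.castRingHom ℚ))

local notation "Φ" => intPolyToRatFunc

theorem intPolyToRatFunc_ne_zero {d : ℤ[X]} (hd : d.Monic) : Φ d ≠ 0 :=
  RatFunc.algebraMap_ne_zero (hd.map (Int.castRingHom ℚ)).ne_zero

/-- The ring `L`. -/
noncomputable def monicDenomSubring : Subring (RatFunc ℚ) where
  carrier := {x | ∃ c d : ℤ[X], d.Monic ∧ x = Φ c / Φ d}
  one_mem' := ⟨1, 1, monic_one, by simp⟩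
  zero_mem' := ⟨0, 1, monic_one, by simp⟩
  mul_mem' := by
    rintro x y ⟨c₁, d₁, hd₁, rfl⟩ ⟨c₂, d₂, hd₂, rfl⟩
    exact ⟨c₁ * c₂, d₁ * d₂, hd₁.mul hd₂, by rw [map_mul, map_mul, div_mul_div_comm]⟩
  add_mem' := by
    rintro x y ⟨c₁, d₁, hd₁, rfl⟩ ⟨c₂, d₂, hd₂, rfl⟩
    refine ⟨c₁ * d₂ + d₁ * c₂, d₁ * d₂, hd₁.mul hd₂, ?_⟩
    rw [div_add_div _ _ (intPolyToRatFunc_ne_zero hd₁) (intPolyToRatFunc_ne_zero hd₂),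
      map_add, map_mul, map_mul, map_mul]
  neg_mem' := by
    rintro x ⟨c, d, hd, rfl⟩
    exact ⟨-c, d, hd, by rw [map_neg, neg_div]⟩

theorem div_mem_monicDenomSubring (c : ℤ[X]) {d : ℤ[X]} (hd : d.Monic) :
    Φ c / Φ d ∈ monicDenomSubring :=
  ⟨c, d, hd, rfl⟩

theorem exists_mem_monicDenomSubring_pow_sub_comp_X_pow_eq (p : ℕ) [Fact p.Prime] (a : ℤ[X])
    {b : ℤ[X]} (hb : b.Monic) :
    ∃ w ∈ monicDenomSubring,
      (Φ a / Φ b) ^ p - Φ (a.comp (X ^ p)) / Φ (b.comp (X ^ p)) = p * w := by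
  have hbp : (b.comp (X ^ p)).Monic := Monic.expand (Fact.out : p.Prime).pos hb
  obtain ⟨s, hs⟩ := natCast_dvd_pow_sub_comp_X_pow p a
  obtain ⟨t, ht⟩ := natCast_dvd_pow_sub_comp_X_pow p b
  refine ⟨_, div_mem_monicDenomSubring (s * b.comp (X ^ p) - a.comp (X ^ p) * t)
    ((hb.pow p).mul hbp), ?_⟩
  simp only [map_sub, map_mul, map_pow]
  refine div_pow_sub_div_eq_mul (intPolyToRatFunc_ne_zero hb) (intPolyToRatFunc_ne_zero hbp)
    ?_ ?_
  · simpa [sub_eq_iff_eq_add'] using congrArg Φ hs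
  · simpa [sub_eq_iff_eq_add'] using congrArg Φ ht

/-- For `g(x) = a(x)/b(x)` with `a, b ∈ ℤ[x]`, `b` monic, a prime `p` and `r ≥ 1`,
`g(x)^(p^r) - g(x^p)^(p^(r-1)) = p^r · h(x)` for some `h` in the ring `L` of rational
functions with monic integer denominator. -/
theorem stmt_12 (a b : Polynomial ℤ) (hb : b.Monic) (p : ℕ) (hp : p.Prime)
    (r : ℕ) (hr : 1 ≤ r) :
    ∃ c d : Polynomial ℤ, d.Monic ∧
      (algebraMap (Polynomial ℚ) (RatFunc ℚ) (a.map (Int.castRingHom ℚ))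
          / algebraMap (Polynomial ℚ) (RatFunc ℚ) (b.map (Int.castRingHom ℚ))) ^ (p ^ r)
        - (algebraMap (Polynomial ℚ) (RatFunc ℚ) ((a.comp (X ^ p)).map (Int.castRingHom ℚ))
            / algebraMap (Polynomial ℚ) (RatFunc ℚ)
              ((b.comp (X ^ p)).map (Int.castRingHom ℚ))) ^ (p ^ (r - 1))
      = (p : RatFunc ℚ) ^ r *
          (algebraMap (Polynomial ℚ) (RatFunc ℚ) (c.map (Int.castRingHom ℚ))
            / algebraMap (Polynomial ℚ) (RatFunc ℚ) (d.map (Int.castRingHom ℚ))) := by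
  have : Fact p.Prime := ⟨hp⟩
  have hbp : (b.comp (X ^ p)).Monic := Monic.expand hp.pos hb
  obtain ⟨w, hw, hw_eq⟩ := exists_mem_monicDenomSubring_pow_sub_comp_X_pow_eq p a hb
  obtain ⟨y, ⟨c, d, hd, rfl⟩, hy_eq⟩ := monicDenomSubring.exists_mem_pow_pow_sub_pow_eq
    (div_mem_monicDenomSubring a hb) (div_mem_monicDenomSubring _ hbp) hw hw_eq (r - 1)
  refine ⟨c, d, hd, ?_⟩
  rwa [Nat.sub_add_cancel hr] at hy_eq
end

section
/- For a prime p and integers a ≥ b ≥ 0 and r ≥ 1, C(p^r a, p^r b) ≡ C(p^{r-1} a, p^{r-1} b) (mod p^{2r}). -/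
/-!
Write `n!ₚ = coprimeFactorial p n` for the product of the integers in `[1, n]` prime to `p`. Since
`(p n)! = p ^ n * n! * (p n)!ₚ`, the binomial coefficients satisfy the exact identity
`C(p m, p k) * (p k)!ₚ * (p (m - k))!ₚ = C(m, k) * (p m)!ₚ`.
For `q = p ^ r > 2`, the units of a block `(q t, q t + q]` pair up as `q t + i` and `q t + (q - i)`,
whose product is `i (q - i) + q² t (t + 1)`; hence `(q t)!ₚ ≡ (q!ₚ) ^ t [MOD q²]`, and with
`m = p ^ (r - 1) a`, `k = p ^ (r - 1) b` the three coprime parts cancel modulo `q²`.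
For `q = 2` the block product `2 t + 1` is not `≡ 1 [MOD 4]`; instead
`(2 n)!₂ ≡ 3 ^ (n / 2) [MOD 4]`, and the stray factor `3` appears only when `a` is even and `b` odd,
where `C(a, b)` is even.
-/

open Finset
open scoped Nat

theorem Finset.prod_eq_prod_of_involution {ι M : Type*} [CommMonoid M] {s : Finset ι}
    {f g : ι → M} (σ : ι → ι) (hσ_mem : ∀ a ∈ s, σ a ∈ s) (hσ_invol : ∀ a ∈ s, σ (σ a) = a)
    (hσ_ne : ∀ a ∈ s, σ a ≠ a) (h : ∀ a ∈ s, f a * f (σ a) = g a * g (σ a)) :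
    ∏ x ∈ s, f x = ∏ x ∈ s, g x := by
  classical
  induction s using Finset.strongInduction with | H s ih => ?_
  obtain rfl | ⟨x, hx⟩ := s.eq_empty_or_nonempty
  · rfl
  have hpair : {x, σ x} ⊆ s := by simp [insert_subset_iff, hx, hσ_mem x hx]
  have hrest : ∏ y ∈ s \ {x, σ x}, f y = ∏ y ∈ s \ {x, σ x}, g y :=
    ih _ (ssubset_iff.2 ⟨x, by simp [insert_subset_iff, hx]⟩) (by grind) (by grind) (by grind)
      (by grind)
  rw [← prod_sdiff hpair, ← prod_sdiff hpair, hrest, prod_pair (hσ_ne x hx).symm,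
    prod_pair (hσ_ne x hx).symm, h x hx]

def coprimeFactorial (p n : ℕ) : ℕ := ∏ i ∈ Ioc 0 n with ¬ p ∣ i, i

section coprimeFactorial

variable {p : ℕ}

lemma coprime_coprimeFactorial (hp : p.Prime) (n : ℕ) : Nat.Coprime p (coprimeFactorial p n) :=
  Nat.Coprime.prod_right fun _ hi => hp.coprime_iff_not_dvd.2 (mem_filter.1 hi).2

lemma coprimeFactorial_add (n m : ℕ) :
    coprimeFactorial p (n + m) =
      coprimeFactorial p n * ∏ i ∈ Ioc 0 m with ¬ p ∣ n + i, (n + i) := by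
  simp only [coprimeFactorial, prod_filter]
  rw [← prod_Ioc_consecutive _ (Nat.zero_le n) (Nat.le_add_right n m),
    show Ioc n (n + m) = (Ioc 0 m).image (n + ·) by simp,
    prod_image fun _ _ _ _ h => Nat.add_left_cancel h]

lemma factorial_mul_eq_coprimeFactorial (hp : 0 < p) (n : ℕ) :
    (p * n)! = p ^ n * n ! * coprimeFactorial p (p * n) := by
  have hmult : ∏ i ∈ Ioc 0 (p * n) with p ∣ i, i = ∏ j ∈ Ioc 0 n, p * j := by
    symm
    refine prod_nbij (p * ·) ?_ ?_ ?_ (fun _ _ => rfl)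
    · intro j hj
      rw [mem_Ioc] at hj
      exact mem_filter.2
        ⟨mem_Ioc.2 ⟨Nat.mul_pos hp hj.1, Nat.mul_le_mul_left p hj.2⟩, dvd_mul_right p j⟩
    · intro i _ j _ h
      exact Nat.eq_of_mul_eq_mul_left hp h
    · intro i hi
      obtain ⟨hi, j, rfl⟩ := mem_filter.1 (mem_coe.1 hi)
      rw [mem_Ioc] at hi
      exact ⟨j, mem_Ioc.2 ⟨Nat.pos_of_mul_pos_left hi.1, Nat.le_of_mul_le_mul_left hi.2 hp⟩, rfl⟩
  have hfact : ∀ m, ∏ i ∈ Ioc 0 m, i = m ! := fun m => by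
    induction m with
    | zero => rfl
    | succ m ih => rw [prod_Ioc_succ_top (Nat.zero_le m), ih, Nat.factorial_succ, mul_comm]
  rw [← hfact, ← prod_filter_mul_prod_filter_not (Ioc 0 (p * n)) (p ∣ ·), hmult,
    prod_mul_distrib, prod_const, Nat.card_Ioc, Nat.sub_zero, hfact]
  rfl

lemma choose_mul_mul_coprimeFactorial (hp : 0 < p) {m k : ℕ} (hkm : k ≤ m) :
    (p * m).choose (p * k) * (coprimeFactorial p (p * k) * coprimeFactorial p (p * (m - k))) =
      m.choose k * coprimeFactorial p (p * m) := by
  have hpow : p ^ m = p ^ k * p ^ (m - k) := by rw [← pow_add, Nat.add_sub_cancel' hkm]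
  have hbig := Nat.choose_mul_factorial_mul_factorial (Nat.mul_le_mul_left p hkm)
  rw [← Nat.mul_sub, factorial_mul_eq_coprimeFactorial hp,
    factorial_mul_eq_coprimeFactorial hp] at hbig
  refine Nat.eq_of_mul_eq_mul_left (by positivity : 0 < p ^ m * (k ! * (m - k)!)) ?_
  calc p ^ m * (k ! * (m - k)!) *
        ((p * m).choose (p * k) * (coprimeFactorial p (p * k) * coprimeFactorial p (p * (m - k))))
      = (p * m).choose (p * k) * (p ^ k * k ! * coprimeFactorial p (p * k)) *
          (p ^ (m - k) * (m - k)! * coprimeFactorial p (p * (m - k))) := by rw [hpow]; ring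
    _ = p ^ m * m ! * coprimeFactorial p (p * m) := by
      rw [hbig, factorial_mul_eq_coprimeFactorial hp]
    _ = p ^ m * (k ! * (m - k)!) * (m.choose k * coprimeFactorial p (p * m)) := by
      rw [← Nat.choose_mul_factorial_mul_factorial hkm]; ring

lemma dvd_of_two_mul_eq_pow (hp : p.Prime) {e i : ℕ} (h2 : 2 < p ^ e) (hi : 2 * i = p ^ e) :
    p ∣ i := by
  have he : e ≠ 0 := by rintro rfl; simp at h2
  rcases (Nat.Prime.dvd_mul hp).1 (hi ▸ dvd_pow_self p he) with h | h
  · obtain rfl := (Nat.prime_dvd_prime_iff_eq hp Nat.prime_two).1 h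
    obtain ⟨e, rfl⟩ := Nat.exists_eq_add_one_of_ne_zero he
    have he0 : e ≠ 0 := by rintro rfl; norm_num at h2
    rw [pow_succ', Nat.mul_left_cancel_iff two_pos] at hi
    exact hi ▸ dvd_pow_self 2 he0
  · exact h

lemma prod_pow_mul_add_modEq_coprimeFactorial (hp : p.Prime) {e : ℕ} (h2 : 2 < p ^ e) (t : ℕ) :
    ∏ i ∈ Ioc 0 (p ^ e) with ¬ p ∣ i, (p ^ e * t + i) ≡ coprimeFactorial p (p ^ e)
      [MOD (p ^ e) ^ 2] := by
  set q := p ^ e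
  have hpq : p ∣ q := dvd_pow_self p (by rintro rfl; simp [q] at h2)
  have hmem : ∀ i ∈ {i ∈ Ioc 0 q | ¬ p ∣ i}, i < q ∧ ¬ p ∣ i := by
    intro i hi
    obtain ⟨hi, hpi⟩ := mem_filter.1 hi
    exact ⟨lt_of_le_of_ne (mem_Ioc.1 hi).2 (by rintro rfl; exact hpi hpq), hpi⟩
  rw [← ZMod.natCast_eq_natCast_iff, coprimeFactorial, Nat.cast_prod, Nat.cast_prod]
  refine prod_eq_prod_of_involution (q - ·) ?_ ?_ ?_ ?_
  · intro i hi
    obtain ⟨hiq, hpi⟩ := hmem i hi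
    refine mem_filter.2 ⟨mem_Ioc.2 ⟨by omega, by omega⟩, fun h => hpi ?_⟩
    simpa [Nat.sub_sub_self hiq.le] using Nat.dvd_sub hpq h
  · intro i hi
    exact Nat.sub_sub_self (hmem i hi).1.le
  · intro i hi hfix
    exact (hmem i hi).2 (dvd_of_two_mul_eq_pow hp h2 (by omega))
  · intro i hi
    have hpair : (q * t + i) * (q * t + (q - i)) = i * (q - i) + q ^ 2 * (t * (t + 1)) := by
      obtain ⟨j, hj⟩ := Nat.exists_eq_add_of_le (hmem i hi).1.le
      rw [hj, Nat.add_sub_cancel_left]; ring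
    rw [← Nat.cast_mul, ← Nat.cast_mul, hpair, Nat.cast_add, Nat.cast_mul (q ^ 2),
      ZMod.natCast_self, zero_mul, add_zero]

lemma coprimeFactorial_pow_mul_modEq (hp : p.Prime) {e : ℕ} (h2 : 2 < p ^ e) (t : ℕ) :
    coprimeFactorial p (p ^ e * t) ≡ coprimeFactorial p (p ^ e) ^ t [MOD (p ^ e) ^ 2] := by
  have hpq : p ∣ p ^ e := dvd_pow_self p (by rintro rfl; simp at h2)
  induction t with
  | zero => rfl
  | succ t ih =>
    have hblock : ∏ i ∈ Ioc 0 (p ^ e) with ¬ p ∣ p ^ e * t + i, (p ^ e * t + i) =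
        ∏ i ∈ Ioc 0 (p ^ e) with ¬ p ∣ i, (p ^ e * t + i) := by
      refine prod_congr (filter_congr fun i _ => ?_) fun _ _ => rfl
      rw [Nat.dvd_add_right (dvd_mul_of_dvd_left hpq t)]
    rw [mul_add_one, coprimeFactorial_add, hblock, pow_succ]
    exact ih.mul (prod_pow_mul_add_modEq_coprimeFactorial hp h2 t)

lemma choose_pow_mul_modEq (hp : p.Prime) {r : ℕ} (h2 : 2 < p ^ r) {a b : ℕ} (hab : b ≤ a) :
    (p ^ r * a).choose (p ^ r * b) ≡ (p ^ (r - 1) * a).choose (p ^ (r - 1) * b)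
      [MOD p ^ (2 * r)] := by
  have hr : p * p ^ (r - 1) = p ^ r := by
    rw [← pow_succ', Nat.sub_add_cancel (Nat.pos_of_ne_zero (by rintro rfl; simp at h2))]
  have hid := choose_mul_mul_coprimeFactorial hp.pos (Nat.mul_le_mul_left (p ^ (r - 1)) hab)
  have hshift : ∀ n, p * (p ^ (r - 1) * n) = p ^ r * n := fun n => by rw [← mul_assoc, hr]
  simp only [← Nat.mul_sub, hshift] at hid
  have hG := coprimeFactorial_pow_mul_modEq hp h2
  set G := coprimeFactorial p (p ^ r)
  rw [pow_mul']
  refine Nat.ModEq.cancel_right_of_coprime (c := G ^ a)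
    (((coprime_coprimeFactorial hp _).pow r a).pow_left 2) ?_
  calc (p ^ r * a).choose (p ^ r * b) * G ^ a
      = (p ^ r * a).choose (p ^ r * b) * (G ^ b * G ^ (a - b)) := by
        rw [← pow_add, Nat.add_sub_cancel' hab]
    _ ≡ (p ^ r * a).choose (p ^ r * b) *
          (coprimeFactorial p (p ^ r * b) * coprimeFactorial p (p ^ r * (a - b))) [MOD _] :=
        ((hG b).symm.mul (hG (a - b)).symm).mul_left _
    _ = (p ^ (r - 1) * a).choose (p ^ (r - 1) * b) * coprimeFactorial p (p ^ r * a) := hid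
    _ ≡ (p ^ (r - 1) * a).choose (p ^ (r - 1) * b) * G ^ a [MOD _] := (hG a).mul_left _

lemma coprimeFactorial_two_mul_modEq (n : ℕ) :
    coprimeFactorial 2 (2 * n) ≡ 3 ^ (n / 2) [MOD 4] := by
  induction n with
  | zero => rfl
  | succ n ih =>
    have hstep : coprimeFactorial 2 (2 * (n + 1)) = coprimeFactorial 2 (2 * n) * (2 * n + 1) := by
      rw [mul_add_one, coprimeFactorial_add]
      simp [prod_filter, prod_Ioc_succ_top]
    have hlast : 2 * n + 1 ≡ 3 ^ (n % 2) [MOD 4] := by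
      rcases Nat.mod_two_eq_zero_or_one n with h | h <;> rw [h] <;> (unfold Nat.ModEq; omega)
    rw [hstep, show (n + 1) / 2 = n / 2 + n % 2 by omega, pow_add]
    exact ih.mul hlast

lemma choose_two_mul_modEq {a b : ℕ} (hab : b ≤ a) :
    (2 * a).choose (2 * b) ≡ a.choose b [MOD 4] := by
  have hid := choose_mul_mul_coprimeFactorial two_pos hab
  set u := b / 2 + (a - b) / 2
  have hchoose : a.choose b * 3 ^ (a / 2) ≡ a.choose b * 3 ^ u [MOD 4] := by
    by_cases hodd : b % 2 = 1 ∧ (a - b) % 2 = 1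
    · obtain ⟨c, hc⟩ : 2 ∣ a.choose b := Nat.modEq_zero_iff_dvd.1 <| by
        simpa [show a % 2 = 0 by omega, hodd.1] using
          Choose.choose_modEq_choose_mod_mul_choose_div_nat (p := 2) (n := a) (k := b)
      rw [show a / 2 = u + 1 by omega, hc,
        show 2 * c * 3 ^ (u + 1) = 2 * c * 3 ^ u + 4 * (c * 3 ^ u) by ring]
      exact Nat.add_mul_mod_self_left _ _ _
    · rw [show a / 2 = u by omega]
  refine Nat.ModEq.cancel_right_of_coprime (c := 3 ^ u) (Nat.Coprime.pow_right u (by norm_num)) ?_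
  calc (2 * a).choose (2 * b) * 3 ^ u
      = (2 * a).choose (2 * b) * (3 ^ (b / 2) * 3 ^ ((a - b) / 2)) := by rw [pow_add]
    _ ≡ (2 * a).choose (2 * b) *
          (coprimeFactorial 2 (2 * b) * coprimeFactorial 2 (2 * (a - b))) [MOD 4] :=
        ((coprimeFactorial_two_mul_modEq b).symm.mul
          (coprimeFactorial_two_mul_modEq (a - b)).symm).mul_left _
    _ = a.choose b * coprimeFactorial 2 (2 * a) := hid
    _ ≡ a.choose b * 3 ^ (a / 2) [MOD 4] := (coprimeFactorial_two_mul_modEq a).mul_left _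
    _ ≡ a.choose b * 3 ^ u [MOD 4] := hchoose

end coprimeFactorial

/-- For a prime `p`, integers `a ≥ b ≥ 0` and `r ≥ 1`,
`C(p^r a, p^r b) ≡ C(p^(r-1) a, p^(r-1) b) (mod p^(2r))`. -/
theorem stmt_13 (p : ℕ) (hp : p.Prime) (r : ℕ) (hr : 1 ≤ r) (a b : ℕ) (hab : b ≤ a) :
    Nat.choose (p ^ r * a) (p ^ r * b)
      ≡ Nat.choose (p ^ (r - 1) * a) (p ^ (r - 1) * b) [MOD p ^ (2 * r)] := by
  by_cases h2 : 2 < p ^ r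
  · exact choose_pow_mul_modEq hp h2 hab
  · obtain rfl : p = 2 :=
      le_antisymm ((Nat.le_self_pow (by omega) p).trans (not_lt.1 h2)) hp.two_le
    obtain rfl : r = 1 := by
      by_contra hr1
      exact h2 (lt_of_lt_of_le (by norm_num) (Nat.pow_le_pow_right two_pos (show 2 ≤ r by omega)))
    simpa using choose_two_mul_modEq hab
end
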